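/- Let f : Δ = [a,b]×[c,d] → (0,∞) be coordinated 2-convex with a < b, c < d. Then (1/((b-a)(d-c))) ∫_a^b ∫_c^d f(x,y)² dy dx ≤ (1/(4(b-a))) [∫_a^b f(x,c)² dx + ∫_a^b f(x,d)² dx] + (1/(4(d-c))) [∫_c^d f(a,y)² dy + ∫_c^d f(b,y)² dy]. -/

import Mathlib

open MeasureTheory Set

/-!
A convex function on `[c, d]` lies below its chord, so integrating the chord gives the
one-variable Hermite–Hadamard bound `∫ h ≤ (d - c) / 2 * (h c + h d)`. Applied to the convex
slices `y ↦ f x y ^ 2` and integrated in `x`, it bounds the double integral by `(d - c) / 2` times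
the sum of the two edge integrals in `x`; by Fubini the same argument in the other order gives
the bound `(b - a) / 2` times the edge integrals in `y`. The theorem is the average of the two.
-/

lemma convexOn_of_forall_mem_Icc_le {s : Set ℝ} {g : ℝ → ℝ} (hs : Convex ℝ s)
    (hg : ∀ u ∈ s, ∀ v ∈ s, ∀ t ∈ Icc (0 : ℝ) 1,
      g (t * u + (1 - t) * v) ≤ t * g u + (1 - t) * g v) :
    ConvexOn ℝ s g := by
  refine ⟨hs, fun u hu v hv t r ht hr htr => ?_⟩
  obtain rfl : r = 1 - t := by linarith
  exact hg u hu v hv t ⟨ht, by linarith⟩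

namespace ConvexOn

variable {a b : ℝ} {g : ℝ → ℝ}

lemma abs_le_of_mem_Icc (hg : ConvexOn ℝ (Icc a b) g) {x : ℝ} (hx : x ∈ Icc a b) :
    |g x| ≤ |max (g a) (g b)| + 2 * |g ((a + b) / 2)| := by
  have hab : a ≤ b := hx.1.trans hx.2
  have ha : a ∈ Icc a b := left_mem_Icc.2 hab
  have hb : b ∈ Icc a b := right_mem_Icc.2 hab
  have hx' : a + b - x ∈ Icc a b := ⟨by linarith [hx.2], by linarith [hx.1]⟩
  have hupper := hg.le_max_of_mem_Icc ha hb hx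
  have hupper' := hg.le_max_of_mem_Icc ha hb hx'
  -- lower bound: `(a + b) / 2` is the midpoint of `x` and its reflection `a + b - x`
  have hmid : g ((a + b) / 2) ≤ (g x + g (a + b - x)) / 2 := by
    have := hg.2 hx hx' (by norm_num : (0 : ℝ) ≤ 1 / 2) (by norm_num : (0 : ℝ) ≤ 1 / 2)
      (by norm_num)
    simp only [smul_eq_mul] at this
    calc g ((a + b) / 2) = g (1 / 2 * x + 1 / 2 * (a + b - x)) := by ring_nf
      _ ≤ 1 / 2 * g x + 1 / 2 * g (a + b - x) := this
      _ = (g x + g (a + b - x)) / 2 := by ring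
  rw [abs_le]
  constructor <;> linarith [le_abs_self (max (g a) (g b)), neg_abs_le (max (g a) (g b)),
    neg_abs_le (g ((a + b) / 2)), abs_nonneg (g ((a + b) / 2))]

lemma integrableOn_Icc (hg : ConvexOn ℝ (Icc a b) g) : IntegrableOn g (Icc a b) := by
  have hcont : ContinuousOn g (Ioo a b) := by
    simpa only [interior_Icc] using hg.continuousOn_interior
  refine IntegrableOn.congr_set_ae ?_ Ioo_ae_eq_Icc.symm
  refine Integrable.mono' (integrable_const (|max (g a) (g b)| + 2 * |g ((a + b) / 2)|))
    (hcont.aestronglyMeasurable measurableSet_Ioo) ?_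
  filter_upwards [ae_restrict_mem measurableSet_Ioo] with x hx
  exact hg.abs_le_of_mem_Icc (Ioo_subset_Icc_self hx)

lemma intervalIntegrable (hg : ConvexOn ℝ (Icc a b) g) (hab : a ≤ b) :
    IntervalIntegrable g volume a b :=
  (intervalIntegrable_iff_integrableOn_Icc_of_le hab).2 hg.integrableOn_Icc

lemma le_secant (hg : ConvexOn ℝ (Icc a b) g) {x : ℝ} (hx : x ∈ Icc a b) :
    g x ≤ g a + (g b - g a) / (b - a) * (x - a) := by
  rcases hx.1.eq_or_lt with rfl | hax
  · simp
  have hslope := hg.secant_mono (left_mem_Icc.2 (hx.1.trans hx.2)) hx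
    (right_mem_Icc.2 (hx.1.trans hx.2)) hax.ne' (hax.trans_le hx.2).ne' hx.2
  linarith [(div_le_iff₀ (sub_pos.2 hax)).1 hslope]

lemma intervalIntegral_le (hg : ConvexOn ℝ (Icc a b) g) (hab : a ≤ b) :
    ∫ x in a..b, g x ≤ (b - a) / 2 * (g a + g b) := by
  calc ∫ x in a..b, g x ≤ ∫ x in a..b, g a + (g b - g a) / (b - a) * (x - a) :=
        intervalIntegral.integral_mono_on hab (hg.intervalIntegrable hab)
          (Continuous.intervalIntegrable (by fun_prop) _ _) fun _ hx => hg.le_secant hx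
    _ = (b - a) / 2 * (g a + g b) := by
        rcases hab.eq_or_lt with rfl | hab
        · simp
        rw [intervalIntegral.integral_add intervalIntegrable_const
          ((Continuous.intervalIntegrable (by fun_prop) _ _).const_mul _),
          intervalIntegral.integral_const, intervalIntegral.integral_const_mul,
          intervalIntegral.integral_comp_sub_right (fun x => x), integral_id]
        field_simp
        ring

end ConvexOn

section Fubini

variable {a b c d : ℝ} {F : ℝ → ℝ → ℝ}

lemma MeasureTheory.IntegrableOn.intervalIntegrable_intervalIntegral (hab : a ≤ b) (hcd : c ≤ d)
    (hF : IntegrableOn (Function.uncurry F) (Icc a b ×ˢ Icc c d)) :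
    IntervalIntegrable (fun x => ∫ y in c..d, F x y) volume a b := by
  rw [IntegrableOn, Measure.volume_eq_prod, ← Measure.prod_restrict] at hF
  rw [intervalIntegrable_iff_integrableOn_Icc_of_le hab]
  simp_rw [intervalIntegral.integral_of_le hcd, ← integral_Icc_eq_integral_Ioc]
  exact hF.integral_prod_left

lemma intervalIntegral_intervalIntegral_le_of_convexOn_right (hab : a ≤ b) (hcd : c ≤ d)
    (hF : IntegrableOn (Function.uncurry F) (Icc a b ×ˢ Icc c d))
    (hconv : ∀ x ∈ Icc a b, ConvexOn ℝ (Icc c d) (F x))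
    (hc : IntervalIntegrable (F · c) volume a b) (hd : IntervalIntegrable (F · d) volume a b) :
    ∫ x in a..b, ∫ y in c..d, F x y ≤
      (d - c) / 2 * ((∫ x in a..b, F x c) + ∫ x in a..b, F x d) := by
  calc ∫ x in a..b, ∫ y in c..d, F x y ≤ ∫ x in a..b, (d - c) / 2 * (F x c + F x d) :=
        intervalIntegral.integral_mono_on hab (hF.intervalIntegrable_intervalIntegral hab hcd)
          ((hc.add hd).const_mul _) fun x hx => (hconv x hx).intervalIntegral_le hcd
    _ = (d - c) / 2 * ((∫ x in a..b, F x c) + ∫ x in a..b, F x d) := by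
        rw [intervalIntegral.integral_const_mul, intervalIntegral.integral_add hc hd]

lemma intervalIntegral_intervalIntegral_le_of_convexOn_left (hab : a ≤ b) (hcd : c ≤ d)
    (hF : IntegrableOn (Function.uncurry F) (Icc a b ×ˢ Icc c d))
    (hconv : ∀ y ∈ Icc c d, ConvexOn ℝ (Icc a b) (F · y))
    (ha : IntervalIntegrable (F a) volume c d) (hb : IntervalIntegrable (F b) volume c d) :
    ∫ x in a..b, ∫ y in c..d, F x y ≤
      (b - a) / 2 * ((∫ y in c..d, F a y) + ∫ y in c..d, F b y) := by
  have hF_swap : IntegrableOn (Function.uncurry fun y x => F x y) (Icc c d ×ˢ Icc a b) := by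
    rw [Measure.volume_eq_prod] at hF ⊢
    exact hF.swap
  rw [intervalIntegral_intervalIntegral_swap (hF.mono_set (prod_mono
    (uIoc_of_le hab ▸ Ioc_subset_Icc_self) (uIoc_of_le hcd ▸ Ioc_subset_Icc_self)))]
  exact intervalIntegral_intervalIntegral_le_of_convexOn_right hcd hab hF_swap hconv ha hb

end Fubini

theorem coordinated_two_convex_square_hadamard_general
    (a b c d : ℝ) (f : ℝ → ℝ → ℝ) (hab : a < b) (hcd : c < d)
    (hconv₁ : ∀ y ∈ Set.Icc c d, ∀ u₁ ∈ Set.Icc a b, ∀ u₂ ∈ Set.Icc a b, ∀ t ∈ Set.Icc (0:ℝ) 1,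
      f (t * u₁ + (1 - t) * u₂) y ^ 2 ≤ t * f u₁ y ^ 2 + (1 - t) * f u₂ y ^ 2)
    (hconv₂ : ∀ x ∈ Set.Icc a b, ∀ v₁ ∈ Set.Icc c d, ∀ v₂ ∈ Set.Icc c d, ∀ t ∈ Set.Icc (0:ℝ) 1,
      f x (t * v₁ + (1 - t) * v₂) ^ 2 ≤ t * f x v₁ ^ 2 + (1 - t) * f x v₂ ^ 2)
    (hint : IntegrableOn (fun p : ℝ × ℝ => f p.1 p.2 ^ 2) (Set.Icc a b ×ˢ Set.Icc c d) volume) :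
    (1 / ((b - a) * (d - c))) * ∫ x in a..b, ∫ y in c..d, f x y ^ 2 ≤
      (1 / (4 * (b - a))) * ((∫ x in a..b, f x c ^ 2) + (∫ x in a..b, f x d ^ 2)) +
      (1 / (4 * (d - c))) * ((∫ y in c..d, f a y ^ 2) + (∫ y in c..d, f b y ^ 2)) := by
  have hconv_x : ∀ y ∈ Icc c d, ConvexOn ℝ (Icc a b) (fun x => f x y ^ 2) := fun y hy =>
    convexOn_of_forall_mem_Icc_le (convex_Icc a b) (hconv₁ y hy)
  have hconv_y : ∀ x ∈ Icc a b, ConvexOn ℝ (Icc c d) (fun y => f x y ^ 2) := fun x hx =>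
    convexOn_of_forall_mem_Icc_le (convex_Icc c d) (hconv₂ x hx)
  have h_right := intervalIntegral_intervalIntegral_le_of_convexOn_right (F := fun x y => f x y ^ 2)
    hab.le hcd.le hint hconv_y
    ((hconv_x c (left_mem_Icc.2 hcd.le)).intervalIntegrable hab.le)
    ((hconv_x d (right_mem_Icc.2 hcd.le)).intervalIntegrable hab.le)
  have h_left := intervalIntegral_intervalIntegral_le_of_convexOn_left (F := fun x y => f x y ^ 2)
    hab.le hcd.le hint hconv_x
    ((hconv_y a (left_mem_Icc.2 hab.le)).intervalIntegrable hcd.le)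
    ((hconv_y b (right_mem_Icc.2 hab.le)).intervalIntegrable hcd.le)
  have hba : 0 < b - a := sub_pos.2 hab
  have hdc : 0 < d - c := sub_pos.2 hcd
  rw [div_mul_eq_mul_div, one_mul, div_le_iff₀ (by positivity)]
  calc _ ≤ ((d - c) / 2 * ((∫ x in a..b, f x c ^ 2) + ∫ x in a..b, f x d ^ 2) +
        (b - a) / 2 * ((∫ y in c..d, f a y ^ 2) + ∫ y in c..d, f b y ^ 2)) / 2 := by
        linarith
    _ = _ := by field_simp; ring

theorem coordinated_two_convex_square_hadamard
    (a b c d : ℝ) (f : ℝ → ℝ → ℝ) (hab : a < b) (hcd : c < d)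
    (hpos : ∀ x ∈ Set.Icc a b, ∀ y ∈ Set.Icc c d, 0 < f x y)
    (hconv₁ : ∀ y ∈ Set.Icc c d, ∀ u₁ ∈ Set.Icc a b, ∀ u₂ ∈ Set.Icc a b, ∀ t ∈ Set.Icc (0:ℝ) 1,
      f (t * u₁ + (1 - t) * u₂) y ^ 2 ≤ t * f u₁ y ^ 2 + (1 - t) * f u₂ y ^ 2)
    (hconv₂ : ∀ x ∈ Set.Icc a b, ∀ v₁ ∈ Set.Icc c d, ∀ v₂ ∈ Set.Icc c d, ∀ t ∈ Set.Icc (0:ℝ) 1,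
      f x (t * v₁ + (1 - t) * v₂) ^ 2 ≤ t * f x v₁ ^ 2 + (1 - t) * f x v₂ ^ 2)
    (hint : IntegrableOn (fun p : ℝ × ℝ => f p.1 p.2 ^ 2) (Set.Icc a b ×ˢ Set.Icc c d) volume) :
    (1 / ((b - a) * (d - c))) * ∫ x in a..b, ∫ y in c..d, f x y ^ 2 ≤
      (1 / (4 * (b - a))) * ((∫ x in a..b, f x c ^ 2) + (∫ x in a..b, f x d ^ 2)) +
      (1 / (4 * (d - c))) * ((∫ y in c..d, f a y ^ 2) + (∫ y in c..d, f b y ^ 2)) :=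
  coordinated_two_convex_square_hadamard_general a b c d f hab hcd hconv₁ hconv₂ hint
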